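/- Suppose τ₀, τ₁, τ₂ ∈ H satisfy ⟨τ₀,τ₀⟩ = ⟨τ₁,τ₁⟩ = ⟨τ₂,τ₂⟩ = 1/3, τ₂ = ω τ₁, and ⟨Φ₀₀, Φ₀₁⟩ = 0. Then ⟨τ₀, τ₁⟩ = −ω/6 and ⟨τ₀, τ₂⟩ = −ω²/6. -/

import Mathlib

open scoped BigOperators ComplexConjugate

variable {H : Type*} [NormedAddCommGroup H] [InnerProductSpace ℂ H]

/-- The primitive cube root of unity `ω = e^{2πi/3}`. -/
noncomputable def ω : ℂ := Complex.exp (2 * Real.pi * Complex.I / 3)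

/-- `|v_j⟩ = (1/√3)(i|0⟩ + ω^{-j}|1⟩ + ω^{-2j}|2⟩)` in `ℂ³`. -/
noncomputable def v (j : Fin 3) : Fin 3 → ℂ := fun k =>
  ((Real.sqrt 3 : ℂ))⁻¹ * (if k = 0 then Complex.I else ω ^ (-((j : ℕ) * (k : ℕ) : ℤ)))

/-- `|v_j'⟩ = (1/√3)(|0⟩ + ω^{-j}|1⟩ + i ω^{-2j}|2⟩)` in `ℂ³`. -/
noncomputable def v' (j : Fin 3) : Fin 3 → ℂ := fun k =>
  ((Real.sqrt 3 : ℂ))⁻¹ * (if k = 2 then Complex.I else 1) * ω ^ (-((j : ℕ) * (k : ℕ) : ℤ))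

/-- The inner product on `ℂ³ ⊗ H`, viewed as triples of elements of `H`:
`⟨x, y⟩ = ∑ₖ ⟨xₖ, yₖ⟩` (conjugate-linear in the first argument). -/
noncomputable def ip (x y : Fin 3 → H) : ℂ := ∑ k, (inner ℂ (x k) (y k) : ℂ)

/-- `Φ₀₀ = √2 [ |v₀⟩⊗τ₀ − ½|v₁⟩⊗τ₁ − ½|v₂⟩⊗τ₂ ]` in `ℂ³ ⊗ H`. -/
noncomputable def Phi00 (τ₀ τ₁ τ₂ : H) : Fin 3 → H := fun k =>
  (Real.sqrt 2 : ℂ) • (v 0 k • τ₀ - ((1/2 : ℂ) * v 1 k) • τ₁ - ((1/2 : ℂ) * v 2 k) • τ₂)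

/-- `Φ₀₁ = √2 [ −(√3/2)|v₁'⟩⊗τ₁ + (√3/2)|v₂'⟩⊗τ₂ ]` in `ℂ³ ⊗ H`. -/
noncomputable def Phi01 (τ₁ τ₂ : H) : Fin 3 → H := fun k =>
  (Real.sqrt 2 : ℂ) • ((-((Real.sqrt 3 : ℂ) / 2) * v' 1 k) • τ₁ +
    (((Real.sqrt 3 : ℂ) / 2) * v' 2 k) • τ₂)

/-- `Φ₁₀ = √2 [ (√3/2)|v₁⟩⊗τ₁ − (√3/2)|v₂⟩⊗τ₂ ]` in `ℂ³ ⊗ H`. -/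
noncomputable def Phi10 (τ₁ τ₂ : H) : Fin 3 → H := fun k =>
  (Real.sqrt 2 : ℂ) • ((((Real.sqrt 3 : ℂ) / 2) * v 1 k) • τ₁ -
    (((Real.sqrt 3 : ℂ) / 2) * v 2 k) • τ₂)

/-- `Φ₁₁ = √2 [ |v₀'⟩⊗τ₀ − ½|v₁'⟩⊗τ₁ − ½|v₂'⟩⊗τ₂ ]` in `ℂ³ ⊗ H`. -/
noncomputable def Phi11 (τ₀ τ₁ τ₂ : H) : Fin 3 → H := fun k =>
  (Real.sqrt 2 : ℂ) • (v' 0 k • τ₀ - ((1/2 : ℂ) * v' 1 k) • τ₁ - ((1/2 : ℂ) * v' 2 k) • τ₂)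


/-!
Once `τ₂ = ω τ₁`, every term of `⟨Φ₀₀, Φ₀₁⟩` is a multiple of `⟨τ₀, τ₁⟩` or of `‖τ₁‖²`, and
reducing the coefficients with `ω³ = 1`, `conj ω = ω²` and `√3 i = 2ω + 1` collapses the inner
product to `-2ω²⟨τ₀, τ₁⟩ - ‖τ₁‖²`. Orthogonality and `‖τ₁‖² = 1/3` then force
`⟨τ₀, τ₁⟩ = -1/(6ω²) = -ω/6`, and `⟨τ₀, τ₂⟩ = ω ⟨τ₀, τ₁⟩`.
-/

theorem omega_eq : ω = (-1 + Real.sqrt 3 * Complex.I) / 2 := by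
  have h : 2 * Real.pi * Complex.I / 3 = ((Real.pi - Real.pi / 3 : ℝ) : ℂ) * Complex.I := by
    push_cast; ring
  rw [ω, h, Complex.exp_mul_I, ← Complex.ofReal_cos, ← Complex.ofReal_sin, Real.cos_pi_sub,
    Real.sin_pi_sub, Real.cos_pi_div_three, Real.sin_pi_div_three]
  push_cast; ring

theorem ofReal_sqrt_three_sq : (Real.sqrt 3 : ℂ) ^ 2 = 3 := by
  norm_cast; simp

theorem two_mul_omega_add_one : 2 * ω + 1 = Real.sqrt 3 * Complex.I := by
  rw [omega_eq]; ring

theorem omega_pow_three : ω ^ 3 = 1 := by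
  rw [ω, ← Complex.exp_nat_mul]
  convert Complex.exp_two_pi_mul_I using 2
  push_cast; ring

theorem omega_inv : ω⁻¹ = ω ^ 2 :=
  inv_eq_of_mul_eq_one_left (by linear_combination omega_pow_three)

theorem conj_omega : conj ω = ω ^ 2 := by
  rw [omega_eq]
  simp only [map_div₀, map_add, map_neg, map_one, map_mul, Complex.conj_ofReal, Complex.conj_I,
    map_ofNat]
  linear_combination (-Complex.I ^ 2 / 4) * ofReal_sqrt_three_sq - (3 / 4 : ℂ) * Complex.I_sq

theorem ip_Phi00_Phi01_smul_omega (τ₀ τ₁ : H) :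
    ip (Phi00 τ₀ τ₁ (ω • τ₁)) (Phi01 τ₁ (ω • τ₁)) =
      -2 * ω ^ 2 * inner ℂ τ₀ τ₁ - inner ℂ τ₁ τ₁ := by
  simp only [ip, Phi00, Phi01, v, v', Fin.sum_univ_three, inner_sub_left, inner_add_right,
    inner_smul_left, inner_smul_right, inner_self_eq_norm_sq_to_K, Fin.isValue, Fin.reduceEq,
    ↓reduceIte, Fin.coe_ofNat_eq_mod, Nat.one_mod, Nat.zero_mod, Nat.mod_succ, Nat.cast_one,
    Nat.cast_ofNat, CharP.cast_eq_zero, mul_zero, mul_one, zpow_neg, zpow_ofNat,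
    Int.reduceMul, one_div, Complex.coe_algebraMap, map_mul, map_inv₀, map_pow, map_ofNat,
    Complex.conj_ofReal, Complex.conj_I, conj_omega, ← inv_pow, omega_inv]
  have hs2 : (Real.sqrt 2 : ℂ) ^ 2 = 2 := by norm_cast; simp
  grind [omega_pow_three, two_mul_omega_add_one, ofReal_sqrt_three_sq, Complex.I_sq]

theorem tau_zero_inner_general {H : Type*} [NormedAddCommGroup H] [InnerProductSpace ℂ H]
    (τ₀ τ₁ τ₂ : H)
    (h1 : (inner ℂ τ₁ τ₁ : ℂ) = 1/3)
    (h12 : τ₂ = ω • τ₁)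
    (horth : ip (Phi00 τ₀ τ₁ τ₂) (Phi01 τ₁ τ₂) = 0) :
    (inner ℂ τ₀ τ₁ : ℂ) = -ω / 6 ∧ (inner ℂ τ₀ τ₂ : ℂ) = -ω ^ 2 / 6 := by
  subst h12
  rw [ip_Phi00_Phi01_smul_omega, h1] at horth
  have h01 : (inner ℂ τ₀ τ₁ : ℂ) = -ω / 6 := by
    linear_combination (-ω / 2) * horth - (inner ℂ τ₀ τ₁ : ℂ) * omega_pow_three
  exact ⟨h01, by rw [inner_smul_right, h01]; ring⟩

/-- If `⟨τ₀,τ₀⟩ = ⟨τ₁,τ₁⟩ = ⟨τ₂,τ₂⟩ = 1/3`, `τ₂ = ω τ₁` and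
`⟨Φ₀₀,Φ₀₁⟩ = 0`, then `⟨τ₀,τ₁⟩ = -ω/6` and `⟨τ₀,τ₂⟩ = -ω²/6`. -/
theorem tau_zero_inner {H : Type*} [NormedAddCommGroup H] [InnerProductSpace ℂ H]
    (τ₀ τ₁ τ₂ : H)
    (h0 : (inner ℂ τ₀ τ₀ : ℂ) = 1/3) (h1 : (inner ℂ τ₁ τ₁ : ℂ) = 1/3)
    (h2 : (inner ℂ τ₂ τ₂ : ℂ) = 1/3) (h12 : τ₂ = ω • τ₁)
    (horth : ip (Phi00 τ₀ τ₁ τ₂) (Phi01 τ₁ τ₂) = 0) :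
    (inner ℂ τ₀ τ₁ : ℂ) = -ω / 6 ∧ (inner ℂ τ₀ τ₂ : ℂ) = -ω ^ 2 / 6 :=
  tau_zero_inner_general τ₀ τ₁ τ₂ h1 h12 horth
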